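/- Let K ≥ 1 and M ≥ 1 be integers, and for k ∈ {1,…,K} write k' = min(k, M). Let d_1,…,d_K be nonnegative reals and α_1,…,α_K ∈ [0,1] reals. Suppose that for every permutation π of {1,…,K} the inequality Σ_{k=1}^K d_{π(k)}/k' ≤ 1 + Σ_{k=1}^{K−1} (1/k' − 1/K')·α_{π(k)} holds. Then Σ_{k=1}^K d_k ≤ d_MAT + (1 − d_MAT/min(K,M))·Σ_{k=1}^K α_k, where d_MAT = K / ( Σ_{k=1}^K 1/min(k,M) ). -/
import Mathlib


open Finset BigOperators

/-- derivation of Corollary 1, the sum-DoF outer bound, from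
the permuted DoF-region bounds of Theorem 1 of the paper.
Indices are 0-based: the user `k ∈ {1,…,K}` of the paper corresponds to
`i : Fin K` with `k = i + 1`, so `k' = min(k,M) = min(i+1, M)` and the sum over
`k = 1,…,K−1` ranges over those `i` with `i + 1 < K`.  If for every
permutation `π` of the users
`Σ_k d_{π(k)}/k' ≤ 1 + Σ_{k=1}^{K−1} (1/k' − 1/K') α_{π(k)}`,
then `Σ_k d_k ≤ d_MAT + (1 − d_MAT/min(K,M)) Σ_k α_k` where
`d_MAT = K / Σ_{k=1}^K 1/min(k,M)`. -/
theorem stmt11 (K M : ℕ) (hK : 1 ≤ K) (hM : 1 ≤ M)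
    (d : Fin K → ℝ) (hd : ∀ k, 0 ≤ d k)
    (α : Fin K → ℝ) (hα : ∀ k, 0 ≤ α k ∧ α k ≤ 1)
    (dMAT : ℝ)
    (hdMAT : dMAT = (K : ℝ) / ∑ i : Fin K, ((min ((i : ℕ) + 1) M : ℕ) : ℝ)⁻¹)
    (hbound : ∀ π : Equiv.Perm (Fin K),
      ∑ i : Fin K, d (π i) / ((min ((i : ℕ) + 1) M : ℕ) : ℝ) ≤
        1 + ∑ i ∈ Finset.univ.filter (fun i : Fin K => (i : ℕ) + 1 < K),
          (((min ((i : ℕ) + 1) M : ℕ) : ℝ)⁻¹ - ((min K M : ℕ) : ℝ)⁻¹) * α (π i)) :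
    ∑ k : Fin K, d k ≤ dMAT + (1 - dMAT / ((min K M : ℕ) : ℝ)) * ∑ k : Fin K, α k := by
  haveI : NeZero K := ⟨by omega⟩
  set x : Fin K → ℝ := fun i => ((min ((i : ℕ) + 1) M : ℕ) : ℝ) with hxdef
  set e : ℝ := ((min K M : ℕ) : ℝ) with hedef
  have hx : ∀ i, 0 < x i := by
    intro i
    have h1 : 0 < min ((i : ℕ) + 1) M := by omega
    show (0 : ℝ) < ((min ((i : ℕ) + 1) M : ℕ) : ℝ)
    exact_mod_cast h1
  have he : 0 < e := by
    have h1 : 0 < min K M := by omega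
    show (0 : ℝ) < ((min K M : ℕ) : ℝ)
    exact_mod_cast h1
  set S : ℝ := ∑ i : Fin K, (x i)⁻¹ with hSdef
  have hS : 0 < S := Finset.sum_pos (fun i _ => inv_pos.mpr (hx i)) ⟨⟨0, by omega⟩, mem_univ _⟩
  set D : ℝ := ∑ k : Fin K, d k with hDdef
  set A : ℝ := ∑ k : Fin K, α k with hAdef
  set F : Finset (Fin K) := Finset.univ.filter (fun i : Fin K => (i : ℕ) + 1 < K) with hFdef
  set last : Fin K := ⟨K - 1, by omega⟩ with hlastdef
  have hxlast : x last = e := by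
    simp only [hxdef, hedef, hlastdef]
    congr 2
    omega
  have hF : F = Finset.univ.erase last := by
    ext i
    simp [hFdef, hlastdef, Fin.ext_iff]
    omega
  -- value of the filtered coefficient sum
  have hT : ∑ i ∈ F, ((x i)⁻¹ - e⁻¹) = S - (K : ℝ) * e⁻¹ := by
    rw [hF, Finset.sum_erase_eq_sub (mem_univ last)]
    rw [Finset.sum_sub_distrib, Finset.sum_const, hxlast]
    rw [← hSdef, Finset.card_univ, Fintype.card_fin]
    ring
  -- sum the bound over all cyclic shifts
  have hshift : ∀ i : Fin K, (∑ j : Fin K, d (j + i)) = D := by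
    intro i
    rw [hDdef]
    exact Fintype.sum_equiv (Equiv.addRight i) _ _ (fun j => rfl)
  have hshiftα : ∀ i : Fin K, (∑ j : Fin K, α (j + i)) = A := by
    intro i
    rw [hAdef]
    exact Fintype.sum_equiv (Equiv.addRight i) _ _ (fun j => rfl)
  have key : S * D ≤ (K : ℝ) + (S - (K : ℝ) * e⁻¹) * A := by
    have hsum : ∑ j : Fin K, (∑ i : Fin K, d (j + i) / x i) ≤
        ∑ j : Fin K, (1 + ∑ i ∈ F, ((x i)⁻¹ - e⁻¹) * α (j + i)) := by
      apply Finset.sum_le_sum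
      intro j _
      have := hbound (Equiv.addLeft j)
      simpa [hxdef, hedef, hFdef] using this
    have hL : ∑ j : Fin K, (∑ i : Fin K, d (j + i) / x i) = S * D := by
      rw [Finset.sum_comm]
      have : ∀ i : Fin K, (∑ j : Fin K, d (j + i) / x i) = (x i)⁻¹ * D := by
        intro i
        rw [← Finset.sum_div, hshift i]
        rw [div_eq_inv_mul]
      simp_rw [this]
      rw [← Finset.sum_mul, ← hSdef]
    have hR : ∑ j : Fin K, (1 + ∑ i ∈ F, ((x i)⁻¹ - e⁻¹) * α (j + i)) =
        (K : ℝ) + (S - (K : ℝ) * e⁻¹) * A := by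
      rw [Finset.sum_add_distrib, Finset.sum_const]
      rw [Finset.sum_comm]
      have : ∀ i : Fin K, (∑ j : Fin K, ((x i)⁻¹ - e⁻¹) * α (j + i)) =
          ((x i)⁻¹ - e⁻¹) * A := by
        intro i
        rw [← Finset.mul_sum, hshiftα i]
      simp_rw [this]
      rw [← Finset.sum_mul, hT]
      simp
    rw [hL] at hsum
    rw [hR] at hsum
    exact hsum
  -- conclude by dividing by S
  have hSne : S ≠ 0 := ne_of_gt hS
  have hene : e ≠ 0 := ne_of_gt he
  have hgoal : dMAT + (1 - dMAT / e) * A = ((K : ℝ) + (S - (K : ℝ) * e⁻¹) * A) / S := by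
    rw [hdMAT]
    field_simp
  show D ≤ dMAT + (1 - dMAT / e) * A
  rw [hgoal, le_div_iff₀ hS]
  linarith [key]
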